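/- arXiv:1006.4063 — 4 statements merged into one kernel-verified Lean document; each statement's English description precedes it below -/
import Mathlib

section
/- For every natural number n ≥ 1, ∑_{j=1}^{n} j(n−j+1)H_{n−j} = (6n(n²+3n+2)H_{n+1} − 5n³ − 27n² − 22n)/36, where H_k is the k-th harmonic number and H_0 = 0. -/
open Finset

noncomputable def H (n : ℕ) : ℝ := ∑ i ∈ Finset.Icc 1 n, (1:ℝ)/i
noncomputable def H2 (n : ℕ) : ℝ := ∑ i ∈ Finset.Icc 1 n, (1:ℝ)/(i:ℝ)^2

/-!
Reflecting `j ↦ n - j` turns the sum into `∑_{k<n} (n - k)(k + 1) H_k`, and a weight `n - k`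
is the same as summing partial sums: `∑_{k<n} (n - k) a_k = ∑_{m<n} ∑_{k≤m} a_k`.
The inner sums `∑_{k≤m} (k + 1) H_k` and then the outer one have closed forms, each proved
by induction from `H_{m+1} = H_m + 1/(m+1)`.
-/

lemma H_succ (n : ℕ) : H (n + 1) = H n + 1 / ((n : ℝ) + 1) := by
  rw [H, H, sum_Icc_succ_top (by omega)]
  push_cast
  ring

lemma sum_range_sub_mul_eq_sum_partialSums {R : Type*} [CommRing R] (f : ℕ → R) (n : ℕ) :
    ∑ k ∈ range n, ((n : R) - k) * f k = ∑ m ∈ range n, ∑ k ∈ range (m + 1), f k := by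
  induction n with
  | zero => simp
  | succ n ih =>
    have split : ∑ k ∈ range (n + 1), ((↑(n + 1) : R) - k) * f k
        = ∑ k ∈ range (n + 1), ((n : R) - k) * f k + ∑ k ∈ range (n + 1), f k := by
      rw [← sum_add_distrib]
      refine sum_congr rfl fun k _ => ?_
      push_cast
      ring
    rw [split, sum_range_succ (fun k => ((n : R) - k) * f k), sub_self, zero_mul, add_zero, ih,
      ← sum_range_succ]

lemma sum_range_succ_mul_H (n : ℕ) :
    ∑ k ∈ range (n + 1), ((k : ℝ) + 1) * H k
      = ((n : ℝ) + 1) * (((n : ℝ) + 2) / 2 * H (n + 1) - (n : ℝ) / 4 - 1) := by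
  induction n with
  | zero => simp [H]
  | succ n ih =>
    rw [sum_range_succ, ih, H_succ (n + 1)]
    field_simp
    push_cast
    ring

lemma sum_range_sub_mul_succ_mul_H (n : ℕ) :
    ∑ k ∈ range n, ((n : ℝ) - k) * ((k : ℝ) + 1) * H k
      = (6 * (n : ℝ) * ((n : ℝ) ^ 2 + 3 * n + 2) * H (n + 1)
          - 5 * (n : ℝ) ^ 3 - 27 * (n : ℝ) ^ 2 - 22 * n) / 36 := by
  simp_rw [mul_assoc ((n : ℝ) - _), sum_range_sub_mul_eq_sum_partialSums, sum_range_succ_mul_H]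
  induction n with
  | zero => simp
  | succ n ih =>
    rw [sum_range_succ, ih, H_succ (n + 1)]
    field_simp
    push_cast
    ring

theorem stmt2_general (n : ℕ) :
    ∑ j ∈ Icc 1 n, (j:ℝ)*((n:ℝ)-(j:ℝ)+1)*H (n-j)
      = (6*(n:ℝ)*((n:ℝ)^2+3*(n:ℝ)+2)*H (n+1) - 5*(n:ℝ)^3 - 27*(n:ℝ)^2 - 22*(n:ℝ))/36 := by
  have reflect :=
    sum_Ico_reflect (fun k => ((n : ℝ) - k) * ((k : ℝ) + 1) * H k) 1 (le_refl (n + 1))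
  rw [Nat.sub_self, Nat.add_sub_cancel, Nat.Ico_zero_eq_range] at reflect
  rw [← sum_range_sub_mul_succ_mul_H, ← reflect, ← Ico_add_one_right_eq_Icc]
  refine sum_congr rfl fun j hj => ?_
  rw [Nat.cast_sub (Nat.lt_succ_iff.mp (mem_Ico.mp hj).2)]
  ring

theorem stmt2 (n : ℕ) (hn : 1 ≤ n) :
    ∑ j ∈ Icc 1 n, (j:ℝ)*((n:ℝ)-(j:ℝ)+1)*H (n-j)
      = (6*(n:ℝ)*((n:ℝ)^2+3*(n:ℝ)+2)*H (n+1) - 5*(n:ℝ)^3 - 27*(n:ℝ)^2 - 22*(n:ℝ))/36 :=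
  stmt2_general n
end

section
/- For every natural number n ≥ 1, ∑_{j=1}^{n} j·H_{j-1}·H_{n+1−j} = C(n+2,2)·[(H_{n+1}² − H_{n+1}^{(2)}) − 2(H_{n+1} − 1)], where H_k is the k-th harmonic number with H_0 = 0 and H_k^{(2)} is the k-th harmonic number of order 2. -/
/-!
Writing the sum over the antidiagonal `i + k = n` with `i = j - 1`, the symmetry `i ↔ k` turns the
weight `i + 1` into its average `(n + 2) / 2`, so everything reduces to the harmonic convolution
`C n = ∑_{i+k=n} H_i H_k`. Since `H_{k+1} - H_k = 1/(k+1)`, one has `C (n+1) - C n = ∑_{i+k=n} H_i/(k+1)`,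
and this sum equals `H_{n+1}² - H_{n+1}^{(2)}`: its own increment is `∑_{i+k=n} 1/((i+1)(k+1))`,
which by partial fractions over the constant denominator sum `(i+1) + (k+1) = n+2` is
`2 H_{n+1}/(n+2)`. Summing the increments gives the closed form of `C n`.
-/

open Finset

@[simp]
lemma H_zero : H 0 = 0 := by simp [H]

lemma H2_succ (n : ℕ) : H2 (n + 1) = H2 n + 1 / ((n : ℝ) + 1) ^ 2 := by
  rw [H2, sum_Icc_succ_top (by omega), ← H2]
  push_cast
  rfl

lemma H_eq_sum_range (n : ℕ) : H n = ∑ k ∈ range n, 1 / ((k : ℝ) + 1) := by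
  induction n with
  | zero => simp
  | succ n ih => rw [H_succ, ih, sum_range_succ]

lemma sum_antidiagonal_one_div_succ_mul_succ (n : ℕ) :
    ∑ p ∈ antidiagonal n, 1 / (((p.1 : ℝ) + 1) * ((p.2 : ℝ) + 1)) = 2 * H (n + 1) / ((n : ℝ) + 2) := by
  have partial_fractions : ∀ p ∈ antidiagonal n, 1 / (((p.1 : ℝ) + 1) * ((p.2 : ℝ) + 1))
      = (1 / ((p.1 : ℝ) + 1) + 1 / ((p.2 : ℝ) + 1)) / ((n : ℝ) + 2) := by
    intro p hp
    have hsum : (p.1 : ℝ) + p.2 = n := by exact_mod_cast mem_antidiagonal.mp hp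
    field_simp
    linarith
  have sum_fst : ∑ p ∈ antidiagonal n, 1 / ((p.1 : ℝ) + 1) = H (n + 1) := by
    rw [Nat.sum_antidiagonal_eq_sum_range_succ (fun i _ => 1 / ((i : ℝ) + 1)), H_eq_sum_range]
  have sum_snd : ∑ p ∈ antidiagonal n, 1 / ((p.2 : ℝ) + 1) = H (n + 1) := by
    rw [← sum_fst, ← Nat.sum_antidiagonal_swap]
    rfl
  rw [sum_congr rfl partial_fractions, ← sum_div, sum_add_distrib, sum_fst, sum_snd, two_mul]

lemma sum_antidiagonal_H_div_succ (n : ℕ) :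
    ∑ p ∈ antidiagonal n, H p.1 / ((p.2 : ℝ) + 1) = H (n + 1) ^ 2 - H2 (n + 1) := by
  induction n with
  | zero => simp [H_succ, H2]
  | succ n ih =>
    have hsplit : ∑ p ∈ antidiagonal n, H (p.1 + 1) / ((p.2 : ℝ) + 1)
        = ∑ p ∈ antidiagonal n, H p.1 / ((p.2 : ℝ) + 1)
          + ∑ p ∈ antidiagonal n, 1 / (((p.1 : ℝ) + 1) * ((p.2 : ℝ) + 1)) := by
      rw [← sum_add_distrib]
      refine sum_congr rfl fun p _ => ?_
      rw [H_succ]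
      field_simp
    rw [Nat.sum_antidiagonal_succ, H_zero, zero_div, zero_add, hsplit, ih,
      sum_antidiagonal_one_div_succ_mul_succ, H_succ (n + 1), H2_succ (n + 1)]
    push_cast
    field_simp
    ring

lemma sum_antidiagonal_H_mul_H (n : ℕ) :
    ∑ p ∈ antidiagonal n, H p.1 * H p.2
      = ((n : ℝ) + 1) * ((H (n + 1) ^ 2 - H2 (n + 1)) - 2 * (H (n + 1) - 1)) := by
  induction n with
  | zero => simp [H_succ, H2]
  | succ n ih =>
    have hstep : ∑ p ∈ antidiagonal n, H p.1 * H (p.2 + 1)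
        = ∑ p ∈ antidiagonal n, H p.1 * H p.2 + ∑ p ∈ antidiagonal n, H p.1 / ((p.2 : ℝ) + 1) := by
      rw [← sum_add_distrib]
      refine sum_congr rfl fun p _ => ?_
      rw [H_succ]
      ring
    rw [Nat.sum_antidiagonal_succ', H_zero, mul_zero, zero_add, hstep, ih, sum_antidiagonal_H_div_succ,
      H_succ (n + 1), H2_succ (n + 1)]
    push_cast
    field_simp
    ring

lemma two_mul_sum_antidiagonal_succ_mul {R : Type*} [CommSemiring R] (g : ℕ → R) (n : ℕ) :
    2 * ∑ p ∈ antidiagonal n, ((p.1 : R) + 1) * (g p.1 * g p.2)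
      = ((n : R) + 2) * ∑ p ∈ antidiagonal n, g p.1 * g p.2 := by
  conv_lhs => rw [two_mul]; enter [2]; rw [← Nat.sum_antidiagonal_swap]
  rw [← sum_add_distrib, mul_sum]
  refine sum_congr rfl fun p hp => ?_
  have hsum : (p.1 : R) + p.2 = n := by rw [← Nat.cast_add, mem_antidiagonal.mp hp]
  simp only [Prod.fst_swap, Prod.snd_swap]
  rw [← hsum]
  ring

lemma sum_Icc_mul_H_mul_H_eq_sum_antidiagonal (n : ℕ) :
    ∑ j ∈ Icc 1 n, (j : ℝ) * H (j - 1) * H (n + 1 - j)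
      = ∑ p ∈ antidiagonal n, ((p.1 : ℝ) + 1) * (H p.1 * H p.2) := by
  rw [Nat.sum_antidiagonal_eq_sum_range_succ (fun i k => ((i : ℝ) + 1) * (H i * H k)),
    sum_range_succ, Nat.sub_self, H_zero, mul_zero, mul_zero, add_zero,
    ← Ico_add_one_right_eq_Icc, sum_Ico_eq_sum_range, Nat.add_sub_cancel]
  refine sum_congr rfl fun k _ => ?_
  rw [show n + 1 - (1 + k) = n - k by omega, Nat.add_sub_cancel_left]
  push_cast
  ring

theorem stmt9_general (n : ℕ) :
    ∑ j ∈ Icc 1 n, (j:ℝ) * H (j-1) * H (n+1-j)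
      = (((n:ℝ)+1)*((n:ℝ)+2)/2)*(((H (n+1))^2 - H2 (n+1)) - 2*(H (n+1) - 1)) := by
  have hsym := two_mul_sum_antidiagonal_succ_mul H n
  rw [sum_antidiagonal_H_mul_H] at hsym
  rw [sum_Icc_mul_H_mul_H_eq_sum_antidiagonal]
  linarith

theorem stmt9 (n : ℕ) (hn : 1 ≤ n) :
    ∑ j ∈ Icc 1 n, (j:ℝ) * H (j-1) * H (n+1-j)
      = (((n:ℝ)+1)*((n:ℝ)+2)/2)*(((H (n+1))^2 - H2 (n+1)) - 2*(H (n+1) - 1)) :=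
  stmt9_general n
end

section
/- Let M_n = 2(n+1)H_n − 4n for n ≥ 0 (with H_0 = 0). Then for every n ≥ 1, ∑_{j=1}^{n} M_{j−1}·M_{n−j} = 4·∑_{j=1}^{n} j·H_{j−1}·(n−j+1)·H_{n−j} − (8n/3)(n²−1)H_{n+1} + (44n/9)(n²−1), where H_k is the k-th harmonic number. -/
/-!
Write `M k = 2 G k - 4 k` with `G k = (k + 1) H k` and index both convolutions by the
antidiagonal `a + b = n - 1`. Expanding `M a * M b` and using the symmetry `a ↔ b` leaves
`4 ∑ G a G b - 16 ∑ a G b + 16 ∑ a b`; the last two sums have closed forms, proved by induction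
from `H (k + 1) = H k + 1 / (k + 1)`, and these combine into the stated correction terms.
-/

open Finset

noncomputable def M (n : ℕ) : ℝ := 2*((n:ℝ)+1)*H n - 4*(n:ℝ)

lemma sum_Icc_one_eq_sum_antidiagonal {β : Type*} [AddCommMonoid β] (f : ℕ → ℕ → β) (m : ℕ) :
    ∑ j ∈ Icc 1 (m + 1), f (j - 1) (m + 1 - j) = ∑ p ∈ antidiagonal m, f p.1 p.2 := by
  refine sum_nbij' (fun j => (j - 1, m + 1 - j)) (fun p => p.1 + 1) ?_ ?_ ?_ ?_
    (fun _ _ => rfl) <;>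
    simp only [mem_Icc, HasAntidiagonal.mem_antidiagonal, Prod.forall, Prod.mk.injEq] <;>
    intros <;> omega

lemma sum_antidiagonal_cast_fst (m : ℕ) :
    ∑ p ∈ antidiagonal m, (p.1 : ℝ) = m * (m + 1) / 2 := by
  induction m with
  | zero => simp
  | succ m ih =>
    rw [Nat.sum_antidiagonal_succ', ih]
    push_cast
    ring

lemma sum_antidiagonal_cast_fst_mul_snd (m : ℕ) :
    ∑ p ∈ antidiagonal m, (p.1 : ℝ) * p.2 = (m - 1) * m * (m + 1) / 6 := by
  induction m with
  | zero => simp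
  | succ m ih =>
    have split : ∀ p ∈ antidiagonal m, (p.1 : ℝ) * ((p.2 + 1 : ℕ) : ℝ)
        = (p.1 : ℝ) * p.2 + p.1 := by
      intros; push_cast; ring
    rw [Nat.sum_antidiagonal_succ', sum_congr rfl split, sum_add_distrib, ih,
      sum_antidiagonal_cast_fst]
    push_cast
    ring

lemma sum_antidiagonal_snd_succ_mul_H (m : ℕ) :
    ∑ p ∈ antidiagonal m, ((p.2 : ℝ) + 1) * H p.2
      = (m + 1) * (m + 2) / 2 * H (m + 1) - (m + 1) * (m + 2) / 4 - (m + 1) / 2 := by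
  induction m with
  | zero => norm_num [H]
  | succ m ih =>
    rw [Nat.sum_antidiagonal_succ, ih, H_succ (m + 1)]
    have : (m : ℝ) + 2 ≠ 0 := by positivity
    push_cast
    field_simp
    ring

lemma sum_antidiagonal_fst_mul_snd_succ_mul_H (m : ℕ) :
    ∑ p ∈ antidiagonal m, (p.1 : ℝ) * (((p.2 : ℝ) + 1) * H p.2)
      = m * (m + 1) * (m + 2) / 6 * H (m + 2) - 11 * m * (m + 1) * (m + 2) / 36
        + (m - 1) * m * (m + 1) / 6 := by
  induction m with
  | zero => simp
  | succ m ih =>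
    have split : ∀ p ∈ antidiagonal m, ((p.1 + 1 : ℕ) : ℝ) * (((p.2 : ℝ) + 1) * H p.2)
        = (p.1 : ℝ) * (((p.2 : ℝ) + 1) * H p.2) + ((p.2 : ℝ) + 1) * H p.2 := by
      intros; push_cast; ring
    rw [Nat.sum_antidiagonal_succ, sum_congr rfl split, sum_add_distrib, ih,
      sum_antidiagonal_snd_succ_mul_H, H_succ (m + 2), H_succ (m + 1)]
    have : (m : ℝ) + 2 ≠ 0 := by positivity
    have : (m : ℝ) + 3 ≠ 0 := by positivity
    push_cast
    field_simp
    ring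

lemma sum_antidiagonal_M_mul_M (m : ℕ) :
    ∑ p ∈ antidiagonal m, M p.1 * M p.2
      = 4 * ∑ p ∈ antidiagonal m, ((p.1 : ℝ) + 1) * H p.1 * (((p.2 : ℝ) + 1) * H p.2)
        - 16 * ∑ p ∈ antidiagonal m, (p.1 : ℝ) * (((p.2 : ℝ) + 1) * H p.2)
        + 16 * ∑ p ∈ antidiagonal m, (p.1 : ℝ) * p.2 := by
  have swap : ∑ p ∈ antidiagonal m, (p.2 : ℝ) * (((p.1 : ℝ) + 1) * H p.1)
      = ∑ p ∈ antidiagonal m, (p.1 : ℝ) * (((p.2 : ℝ) + 1) * H p.2) :=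
    Nat.sum_antidiagonal_swap (f := fun p => (p.1 : ℝ) * (((p.2 : ℝ) + 1) * H p.2))
  calc ∑ p ∈ antidiagonal m, M p.1 * M p.2
      = ∑ p ∈ antidiagonal m, (4 * (((p.1 : ℝ) + 1) * H p.1 * (((p.2 : ℝ) + 1) * H p.2))
          - 8 * ((p.1 : ℝ) * (((p.2 : ℝ) + 1) * H p.2))
          - 8 * ((p.2 : ℝ) * (((p.1 : ℝ) + 1) * H p.1)) + 16 * ((p.1 : ℝ) * p.2)) := by
        refine sum_congr rfl fun p _ => ?_
        rw [M, M]
        ring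
    _ = _ := by
        simp only [sum_add_distrib, sum_sub_distrib, ← mul_sum, swap]
        ring

theorem stmt13 (n : ℕ) (hn : 1 ≤ n) :
    ∑ j ∈ Icc 1 n, M (j-1) * M (n-j)
      = 4 * ∑ j ∈ Icc 1 n, (j:ℝ) * H (j-1) * ((n:ℝ)-(j:ℝ)+1) * H (n-j)
        - (8*(n:ℝ)/3)*((n:ℝ)^2-1)*H (n+1) + (44*(n:ℝ)/9)*((n:ℝ)^2-1) := by
  obtain ⟨m, rfl⟩ : ∃ m, n = m + 1 := ⟨n - 1, by omega⟩
  have rhs_summand : ∀ j ∈ Icc 1 (m + 1),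
      (j:ℝ) * H (j-1) * (((m + 1 : ℕ) : ℝ) - (j:ℝ) + 1) * H (m + 1 - j)
        = (((j - 1 : ℕ) : ℝ) + 1) * H (j - 1) * ((((m + 1 - j : ℕ) : ℝ) + 1) * H (m + 1 - j)) := by
    intro j hj
    rw [mem_Icc] at hj
    rw [Nat.cast_sub hj.1, Nat.cast_sub hj.2]
    push_cast
    ring
  rw [sum_congr rfl rhs_summand,
    sum_Icc_one_eq_sum_antidiagonal (fun a b => M a * M b),
    sum_Icc_one_eq_sum_antidiagonal (fun a b => ((a : ℝ) + 1) * H a * (((b : ℝ) + 1) * H b)),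
    sum_antidiagonal_M_mul_M, sum_antidiagonal_fst_mul_snd_succ_mul_H,
    sum_antidiagonal_cast_fst_mul_snd]
  push_cast
  ring
end

section
/- For every natural number n ≥ 1, ∑_{j=1}^{n} j·H_{j−1}·H_{n+1−j} = ((n+2)/2)·∑_{j=1}^{n} H_j·H_{n−j}, where H_k is the k-th harmonic number with H_0 = 0. -/
open Finset

/-! Nothing about harmonic numbers beyond `H 0 = 0` enters. Because of it, both sides are sums
over the full antidiagonal `i + k = n` (with `i = j - 1` on the left), the left one of
`(i + 1) H_i H_k`. Swapping `i` and `k` turns this into the sum of `(k + 1) H_i H_k`, so twice the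
left side is the sum of `(i + k + 2) H_i H_k`, i.e. `n + 2` times the right-hand sum. -/

lemma sum_Icc_one_eq_sum_range {M : Type*} [AddCommMonoid M] (g : ℕ → M) (n : ℕ) :
    ∑ j ∈ Icc 1 n, g j = ∑ k ∈ range n, g (k + 1) := by
  induction n with
  | zero => simp
  | succ n ih => rw [sum_Icc_succ_top (by omega), sum_range_succ, ih]

section Antidiagonal

variable {R : Type*} [CommSemiring R] (f : ℕ → R)

lemma two_mul_sum_antidiagonal_add_one_mul_mul (n : ℕ) :
    2 * ∑ p ∈ antidiagonal n, ((p.1 : R) + 1) * f p.1 * f p.2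
      = ((n : R) + 2) * ∑ p ∈ antidiagonal n, f p.1 * f p.2 := by
  rw [two_mul]
  nth_rewrite 2 [← Nat.sum_antidiagonal_swap]
  rw [← sum_add_distrib, mul_sum]
  refine sum_congr rfl fun p hp => ?_
  rw [Prod.fst_swap, Prod.snd_swap, ← mem_antidiagonal.mp hp]
  push_cast
  ring

variable {f}

lemma sum_Icc_mul_sub_eq_sum_antidiagonal (hf : f 0 = 0) (n : ℕ) :
    ∑ j ∈ Icc 1 n, f j * f (n - j) = ∑ p ∈ antidiagonal n, f p.1 * f p.2 := by
  rw [Nat.sum_antidiagonal_eq_sum_range_succ (fun i k => f i * f k), sum_range_succ',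
    sum_Icc_one_eq_sum_range]
  simp [hf]

lemma sum_Icc_mul_pred_mul_eq_sum_antidiagonal (hf : f 0 = 0) (n : ℕ) :
    ∑ j ∈ Icc 1 n, (j : R) * f (j - 1) * f (n + 1 - j)
      = ∑ p ∈ antidiagonal n, ((p.1 : R) + 1) * f p.1 * f p.2 := by
  rw [Nat.sum_antidiagonal_eq_sum_range_succ (fun i k => ((i : R) + 1) * f i * f k),
    sum_range_succ, sum_Icc_one_eq_sum_range]
  simp [hf]

end Antidiagonal

theorem stmt18_general (n : ℕ) :
    ∑ j ∈ Icc 1 n, (j:ℝ) * H (j-1) * H (n+1-j)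
      = (((n:ℝ)+2)/2) * ∑ j ∈ Icc 1 n, H j * H (n-j) := by
  have hH : H 0 = 0 := by simp [H]
  have key := two_mul_sum_antidiagonal_add_one_mul_mul H n
  rw [sum_Icc_mul_pred_mul_eq_sum_antidiagonal hH, sum_Icc_mul_sub_eq_sum_antidiagonal hH]
  linarith

theorem stmt18 (n : ℕ) (hn : 1 ≤ n) :
    ∑ j ∈ Icc 1 n, (j:ℝ) * H (j-1) * H (n+1-j)
      = (((n:ℝ)+2)/2) * ∑ j ∈ Icc 1 n, H j * H (n-j) :=
  stmt18_general n
end
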